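/- For all integers n ≥ 1 and k ≥ n + 2, every 2-coloring of the Boolean lattice Q_k in which both the empty set and the full ground set [k] are colored red contains a red copy of Q_2 or a blue copy of Q_n. -/

import Mathlib

/-!
If the red sets are not a chain, two incomparable red sets together with the red sets `∅` and
`[k]` form a red copy of `Q₂`. If they are a chain, two distinct singletons cannot both be red,
so some `{x}` is blue. A minimal red set `M ∋ x` is not `{x}`, so it contains some `y ≠ x`, and
then every set containing `x` but not `y` is blue: a red one would be comparable with `M`, and
minimality rules out both directions. These sets form a blue copy of `Q_{k-2}`, which contains
`Q_n`.
-/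

/-- A red copy of the Boolean lattice `Q m` inside the 2-colored Boolean lattice `Q N`,
where `c S = true` means `S` is red and `c S = false` means `S` is blue. -/
def HasRedCopy (m N : ℕ) (c : Finset (Fin N) → Bool) : Prop :=
  ∃ f : Finset (Fin m) → Finset (Fin N),
    Function.Injective f ∧
    (∀ S T : Finset (Fin m), S ⊆ T ↔ f S ⊆ f T) ∧
    (∀ S : Finset (Fin m), c (f S) = true)

/-- A blue copy of the Boolean lattice `Q m` inside the 2-colored Boolean lattice `Q N`. -/
def HasBlueCopy (m N : ℕ) (c : Finset (Fin N) → Bool) : Prop :=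
  ∃ f : Finset (Fin m) → Finset (Fin N),
    Function.Injective f ∧
    (∀ S T : Finset (Fin m), S ⊆ T ↔ f S ⊆ f T) ∧
    (∀ S : Finset (Fin m), c (f S) = false)

open Finset

lemma hasRedCopy_of_orderEmbedding {m N : ℕ} {c : Finset (Fin N) → Bool}
    (e : Finset (Fin m) ↪o Finset (Fin N)) (he : ∀ S, c (e S) = true) : HasRedCopy m N c :=
  ⟨e, e.injective, fun _ _ => e.le_iff_le.symm, he⟩

lemma hasBlueCopy_of_orderEmbedding {m N : ℕ} {c : Finset (Fin N) → Bool}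
    (e : Finset (Fin m) ↪o Finset (Fin N)) (he : ∀ S, c (e S) = false) : HasBlueCopy m N c :=
  ⟨e, e.injective, fun _ _ => e.le_iff_le.symm, he⟩

section Diamond

variable {α : Type*} [PartialOrder α] [BoundedOrder α]

lemma Finset.fin_two_le_iff (S T : Finset (Fin 2)) :
    S ≤ T ↔ (0 ∈ S → 0 ∈ T) ∧ (1 ∈ S → 1 ∈ T) := by
  rw [← subset_iff.trans Fin.forall_fin_two]

def diamondEmbedding (a b : α) (hab : ¬a ≤ b) (hba : ¬b ≤ a) : Finset (Fin 2) ↪o α :=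
  OrderEmbedding.ofMapLEIff
    (fun S => if 0 ∈ S then (if 1 ∈ S then ⊤ else a) else (if 1 ∈ S then b else ⊥))
    (by
      have ha_bot : ¬a ≤ ⊥ := fun h => hab (h.trans bot_le)
      have hb_bot : ¬b ≤ ⊥ := fun h => hba (h.trans bot_le)
      have htop_a : ¬⊤ ≤ a := fun h => hba (le_top.trans h)
      have htop_b : ¬⊤ ≤ b := fun h => hab (le_top.trans h)
      have htop_bot : ¬(⊤ : α) ≤ ⊥ := fun h => ha_bot (le_top.trans h)
      intro S T
      rw [Finset.fin_two_le_iff]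
      by_cases h0S : 0 ∈ S <;> by_cases h1S : 1 ∈ S <;> by_cases h0T : 0 ∈ T <;>
        by_cases h1T : 1 ∈ T <;> simp [*])

lemma diamondEmbedding_mem (a b : α) (hab : ¬a ≤ b) (hba : ¬b ≤ a) (S : Finset (Fin 2)) :
    diamondEmbedding a b hab hba S ∈ ({⊥, a, b, ⊤} : Set α) := by
  simp only [diamondEmbedding, OrderEmbedding.coe_ofMapLEIff]
  split_ifs <;> simp

end Diamond

def Finset.insertMapEmbedding {α β : Type*} [DecidableEq β] (x : β) (g : α ↪ β)
    (hx : x ∉ Set.range g) : Finset α ↪o Finset β :=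
  OrderEmbedding.ofMapLEIff (fun S => insert x (S.map g)) fun S T => by
    have hxS : x ∉ S.map g := fun h => by
      obtain ⟨a, -, ha⟩ := mem_map.mp h
      exact hx ⟨a, ha⟩
    exact (insert_subset_insert_iff hxS).trans map_subset_map

lemma hasBlueCopy_of_forall_mem_notMem {n N : ℕ} {c : Finset (Fin N) → Bool} {x y : Fin N}
    (hxy : x ≠ y) (hN : n + 2 ≤ N) (hblue : ∀ S, x ∈ S → y ∉ S → c S = false) :
    HasBlueCopy n N c := by
  have hcard : n ≤ ({x, y}ᶜ : Finset (Fin N)).card := by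
    rw [card_compl, Fintype.card_fin]
    have := card_le_two (a := x) (b := y)
    omega
  set g := ({x, y}ᶜ : Finset (Fin N)).orderEmbOfCardLe hcard
  have hg : ∀ i, g i ≠ x ∧ g i ≠ y := fun i => by
    have hgi := orderEmbOfCardLe_mem _ hcard i
    simp only [mem_compl, mem_insert, mem_singleton, not_or] at hgi
    exact hgi
  refine hasBlueCopy_of_orderEmbedding
    (insertMapEmbedding x g.toEmbedding fun ⟨i, hi⟩ => (hg i).1 hi) fun S => hblue _ ?_ ?_
  · exact mem_insert_self _ _
  · simpa [insertMapEmbedding, hxy.symm] using fun i _ => (hg i).2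

section Chain

variable {α : Type*} {c : Finset α → Bool}

lemma exists_singleton_eq_false [Nontrivial α] (hchain : IsChain (· ≤ ·) {S | c S = true}) :
    ∃ x, c {x} = false := by
  by_contra! hred
  obtain ⟨x, y, hxy⟩ := exists_pair_ne α
  rcases hchain.total (x := {x}) (y := {y}) (by simpa using hred x) (by simpa using hred y)
    with h | h
  · exact hxy (singleton_subset_singleton.mp h)
  · exact hxy (singleton_subset_singleton.mp h).symm

lemma exists_forall_mem_notMem_eq_false [Fintype α]
    (hchain : IsChain (· ≤ ·) {S | c S = true}) (htop : c univ = true) {x : α}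
    (hx : c {x} = false) : ∃ y ≠ x, ∀ S, x ∈ S → y ∉ S → c S = false := by
  obtain ⟨M, hM⟩ := exists_minimal_of_wellFoundedLT
    (fun S : Finset α => c S = true ∧ x ∈ S) ⟨univ, htop, mem_univ x⟩
  obtain ⟨hMred, hxM⟩ := hM.prop
  obtain ⟨y, hyM, hyx⟩ : ∃ y ∈ M, y ≠ x := by
    by_contra! h
    rw [eq_singleton_iff_unique_mem.mpr ⟨hxM, h⟩, hx] at hMred
    exact Bool.false_ne_true hMred
  refine ⟨y, hyx, fun S hxS hyS => Bool.not_eq_true _ |>.mp fun hS => ?_⟩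
  rcases hchain.total (show S ∈ {S | c S = true} from hS) hMred with hSM | hMS
  · exact hyS (hM.eq_of_le ⟨hS, hxS⟩ hSM ▸ hyM)
  · exact hyS (hMS hyM)

end Chain

theorem red_top_bottom_general (n k : ℕ) (hk : n + 2 ≤ k)
    (c : Finset (Fin k) → Bool)
    (hbot : c ∅ = true) (htop : c Finset.univ = true) :
    HasRedCopy 2 k c ∨ HasBlueCopy n k c := by
  by_cases hchain : IsChain (· ≤ ·) {S | c S = true}
  · right
    have : Nontrivial (Fin k) := Fin.nontrivial_iff_two_le.mpr (by omega)
    obtain ⟨x, hx⟩ := exists_singleton_eq_false hchain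
    obtain ⟨y, hyx, hy⟩ := exists_forall_mem_notMem_eq_false hchain htop hx
    exact hasBlueCopy_of_forall_mem_notMem hyx.symm hk hy
  · left
    obtain ⟨A, hA, B, hB, -, hAB, hBA⟩ : ∃ A, c A = true ∧ ∃ B, c B = true ∧ A ≠ B ∧
        ¬A ≤ B ∧ ¬B ≤ A := by
      simpa [IsChain, Set.Pairwise] using hchain
    refine hasRedCopy_of_orderEmbedding (diamondEmbedding A B hAB hBA) fun S => ?_
    rcases diamondEmbedding_mem A B hAB hBA S with h | h | h | h <;> rw [h]
    exacts [hbot, hA, hB, htop]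

/-- if n ≥ 1, k ≥ n + 2, and the 2-coloring of Q_k colors both ∅ and [k]
red, then Q_k contains a red copy of Q_2 or a blue copy of Q_n. -/
theorem red_top_bottom (n k : ℕ) (hn : 1 ≤ n) (hk : n + 2 ≤ k)
    (c : Finset (Fin k) → Bool)
    (hbot : c ∅ = true) (htop : c Finset.univ = true) :
    HasRedCopy 2 k c ∨ HasBlueCopy n k c :=
  red_top_bottom_general n k hk c hbot htop
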